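/- Let K be a nonarchimedean field and A a normed K-algebra. For x ∈ A set τ(x) := sup{ |λ| : λ ∈ K and x − λ·1 is not invertible in A } ∪ {0} (a supremum in [0,∞]). The following are equivalent: (1) A is Zariskian (every element of 1 + A°° is a unit, A°° the topologically nilpotent elements); (2) every element of the topological boundary of A^× is a topological divisor of zero; (3) τ(x) ≤ |x|_spc for all x ∈ A; (4) τ(x) ≤ ‖x‖ for all x ∈ A; (5) there exists c > 0 such that τ(x) ≤ c‖x‖ for all x ∈ A; (6) whenever ‖x‖ < 1 there exists n ≥ 1 with 1 − x^n ∈ A^×; (7) whenever the series ∑_{n≥0} ‖x‖^n converges in ℝ, the series ∑_{n≥0} x^n converges in A. -/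

import Mathlib

open Filter Topology

/-!
Everything is reduced to the Zariskian condition (`1 + x` is a unit whenever `x ^ n → 0`) by
divisibility, geometric series and rescaling.

If `‖w ^ N‖ < 1`, then `1 - w` divides the unit `1 - w ^ N`; applied to `w = λ⁻¹ x` this makes
`x - λ` invertible as soon as `|x|_spc < |λ|`. Conversely, a bound `τ(x) ≤ c‖x‖` makes `1 - x ^ n`
invertible once `c‖x ^ n‖ < 1`, and `1 + x` divides `1 - x ^ (2m)`.

In a Zariskian algebra `u + z` is a unit whenever `‖u⁻¹ z‖ < 1`, so the units are open. For a
non-unit `y` near a unit `u` this forces `‖u⁻¹ (y - u)‖ ≥ 1 = ‖1‖`, and the ultrametric inequality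
applied to `u⁻¹ y = 1 + u⁻¹ (y - u)` gives `‖u⁻¹ y‖ ≤ ‖u⁻¹‖ ‖y - u‖`; rescaling `u⁻¹` by scalars
into a fixed shell exhibits `y` as a topological divisor of zero. In the other direction, the unit
`1` is not a topological divisor of zero, so it is not a limit of the non-units `1 - x ^ n`.

Finally `(∑_{i<N} x ^ i) (1 - x) = 1 - x ^ N`, so the geometric series of `x` converges if and only
if `1 - x` is invertible.
-/

/-- The spectral seminorm `|x|_spc = inf_{n ≥ 1} ‖x^n‖^{1/n}` of a seminormed ring. -/
noncomputable def spcSeminorm {A : Type*} [SeminormedRing A] (x : A) : ℝ :=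
  ⨅ n : ℕ, ‖x ^ (n + 1)‖ ^ (((n : ℝ) + 1)⁻¹)

/-- `τ(x)`: the supremum in `[0,∞]` of the absolute values of the scalars `λ` such that
`x - λ·1` is not invertible, together with `0`. -/
noncomputable def tauSpec (K : Type*) {A : Type*} [NontriviallyNormedField K]
    [NormedCommRing A] [NormedAlgebra K A] (x : A) : ENNReal :=
  sSup (insert 0
    {r : ENNReal | ∃ lam : K, ¬ IsUnit (x - algebraMap K A lam) ∧ r = ENNReal.ofReal ‖lam‖})

/-- An element `x` is a topological divisor of zero if there is a sequence whose norms are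
bounded away from `0` and whose products with `x` tend to `0`. -/
def IsTopDivZero {A : Type*} [SeminormedRing A] (x : A) : Prop :=
  ∃ u : ℕ → A, (∃ δ > 0, ∀ n, δ ≤ ‖u n‖) ∧ Tendsto (fun n => u n * x) atTop (nhds 0)

open Finset

def IsZariskian (A : Type*) [Ring A] [TopologicalSpace A] : Prop :=
  ∀ x : A, IsTopologicallyNilpotent x → IsUnit (1 + x)

theorem isUnit_one_add_of_isUnit_one_sub_pow {R : Type*} [CommRing R] {x : R} {n : ℕ}
    (hn : Even n) (h : IsUnit (1 - x ^ n)) : IsUnit (1 + x) := by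
  obtain ⟨m, rfl⟩ := hn
  have hdvd : 1 + x ∣ 1 - (x ^ 2) ^ m :=
    (Dvd.intro (1 - x) (by ring)).trans (one_sub_dvd_one_sub_pow (x ^ 2) m)
  rw [← pow_mul, two_mul] at hdvd
  exact isUnit_of_dvd_unit hdvd h

section TopologicalRing

variable {R : Type*} [Ring R] [TopologicalSpace R] [IsTopologicalRing R] {x : R}

theorem tendsto_geom_sum_mul_one_sub (hx : IsTopologicallyNilpotent x) :
    Tendsto (fun N => (∑ i ∈ range N, x ^ i) * (1 - x)) atTop (𝓝 1) := by
  simpa only [geom_sum_mul_neg, sub_zero] using tendsto_const_nhds.sub hx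

theorem tendsto_geom_sum_of_isUnit_one_sub (hx : IsTopologicallyNilpotent x)
    (hu : IsUnit (1 - x)) :
    Tendsto (fun N => ∑ i ∈ range N, x ^ i) atTop (𝓝 (Ring.inverse (1 - x))) := by
  simpa only [one_mul, mul_assoc, Ring.mul_inverse_cancel _ hu, mul_one] using
    (tendsto_geom_sum_mul_one_sub hx).mul_const (Ring.inverse (1 - x))

end TopologicalRing

theorem isUnit_one_sub_of_tendsto_geom_sum {R : Type*} [CommRing R] [TopologicalSpace R]
    [IsTopologicalRing R] [T2Space R] {x y : R} (hx : IsTopologicallyNilpotent x)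
    (hy : Tendsto (fun N => ∑ i ∈ range N, x ^ i) atTop (𝓝 y)) : IsUnit (1 - x) :=
  .of_mul_eq_one y <| by
    rw [mul_comm]
    exact tendsto_nhds_unique (hy.mul_const _) (tendsto_geom_sum_mul_one_sub hx)

theorem lt_one_of_tendsto_geom_sum {r L : ℝ} (hr : 0 ≤ r)
    (h : Tendsto (fun N => ∑ n ∈ range N, r ^ n) atTop (𝓝 L)) : r < 1 := by
  have hs : Summable (r ^ ·) :=
    ((hasSum_iff_tendsto_nat_of_nonneg (fun n => pow_nonneg hr n) L).mpr h).summable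
  simpa [abs_of_nonneg hr] using summable_geometric_iff_norm_lt_one.mp hs

section SeminormedRing

variable {A : Type*} [SeminormedRing A]

theorem spcSeminorm_nonneg (x : A) : 0 ≤ spcSeminorm x :=
  le_ciInf fun _ => by positivity

theorem spcSeminorm_le_norm (x : A) : spcSeminorm x ≤ ‖x‖ := by
  have hbdd : BddBelow (Set.range fun n : ℕ => ‖x ^ (n + 1)‖ ^ (((n : ℝ) + 1)⁻¹)) :=
    ⟨0, by rintro _ ⟨n, rfl⟩; positivity⟩
  simpa [spcSeminorm] using ciInf_le hbdd 0

theorem exists_norm_pow_lt_pow_of_spcSeminorm_lt {x : A} {r : ℝ} (h : spcSeminorm x < r) :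
    ∃ N : ℕ, ‖x ^ N‖ < r ^ N := by
  obtain ⟨n, hn⟩ := exists_lt_of_ciInf_lt h
  refine ⟨n + 1, ?_⟩
  rw [Real.rpow_inv_lt_iff_of_pos (norm_nonneg _) ((spcSeminorm_nonneg x).trans h.le)
    (by positivity)] at hn
  exact_mod_cast hn

theorem IsUnit.not_isTopDivZero {x : A} (hx : IsUnit x) : ¬ IsTopDivZero x := by
  rintro ⟨u, ⟨δ, hδ, hu⟩, hux⟩
  obtain ⟨y, hy⟩ := hx.exists_right_inv
  have hu0 : Tendsto u atTop (𝓝 0) := by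
    simpa only [mul_assoc, hy, mul_one, zero_mul] using hux.mul_const y
  obtain ⟨n, hn⟩ := (hu0.norm.eventually_lt_const (by rwa [norm_zero])).exists
  exact (hu n).not_gt hn

theorem isTopDivZero_of_norm_mul_le (K : Type*) [NontriviallyNormedField K] [NormedAlgebra K A]
    {y : A} {a : ℕ → A} {ε : ℕ → ℝ} (ha : ∀ n, 0 < ‖a n‖) (hε : Tendsto ε atTop (𝓝 0))
    (hle : ∀ n, ‖a n * y‖ ≤ ‖a n‖ * ε n) : IsTopDivZero y := by
  obtain ⟨c, hc⟩ := NormedField.exists_one_lt_norm K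
  choose d _ hd_lt hd_ge _ using fun n => rescale_to_shell_semi_normed hc one_pos (ha n).ne'
  refine ⟨fun n => d n • a n, ⟨1 / ‖c‖, by positivity, hd_ge⟩, squeeze_zero_norm (fun n => ?_) hε⟩
  have hε0 : 0 ≤ ε n := nonneg_of_mul_nonneg_right ((norm_nonneg _).trans (hle n)) (ha n)
  calc ‖d n • a n * y‖ = ‖d n‖ * ‖a n * y‖ := by rw [smul_mul_assoc, norm_smul]
    _ ≤ ‖d n • a n‖ * ε n := by
      rw [norm_smul, mul_assoc]; exact mul_le_mul_of_nonneg_left (hle n) (norm_nonneg _)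
    _ ≤ ε n := mul_le_of_le_one_left hε0 (hd_lt n).le

end SeminormedRing

section tauSpec

variable {K A : Type*} [NontriviallyNormedField K] [NormedCommRing A] [NormedAlgebra K A]

theorem ofReal_norm_le_tauSpec {x : A} {lam : K} (h : ¬ IsUnit (x - algebraMap K A lam)) :
    ENNReal.ofReal ‖lam‖ ≤ tauSpec K x :=
  le_sSup (Set.mem_insert_of_mem _ ⟨lam, h, rfl⟩)

theorem tauSpec_le_ofReal {x : A} {r : ℝ}
    (h : ∀ lam : K, ¬ IsUnit (x - algebraMap K A lam) → ‖lam‖ ≤ r) :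
    tauSpec K x ≤ ENNReal.ofReal r := by
  refine sSup_le ?_
  rintro _ (rfl | ⟨lam, hlam, rfl⟩)
  · exact zero_le
  · exact ENNReal.ofReal_le_ofReal (h lam hlam)

end tauSpec

theorem exists_isUnit_one_sub_pow_of_isTopDivZero {A : Type*} [SeminormedRing A]
    (h2 : ∀ x ∈ frontier {y : A | IsUnit y}, IsTopDivZero x) {x : A}
    (hx : IsTopologicallyNilpotent x) : ∃ n, 1 ≤ n ∧ IsUnit (1 - x ^ n) := by
  by_contra! hc
  have hlim : Tendsto (fun n => 1 - x ^ n) atTop (𝓝 (1 : A)) := by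
    simpa using tendsto_const_nhds.sub hx
  have h1 : (1 : A) ∈ frontier {y : A | IsUnit y} := by
    rw [frontier_eq_closure_inter_closure]
    exact ⟨subset_closure isUnit_one, mem_closure_of_tendsto hlim ((eventually_ge_atTop 1).mono hc)⟩
  exact isUnit_one.not_isTopDivZero (h2 1 h1)

theorem exists_isUnit_one_sub_pow_of_tauSpec_le {K A : Type*} [NontriviallyNormedField K]
    [NormedCommRing A] [NormedAlgebra K A] {c : ℝ}
    (h5 : ∀ x : A, tauSpec K x ≤ ENNReal.ofReal (c * ‖x‖)) {x : A}
    (hx : IsTopologicallyNilpotent x) : ∃ n, 1 ≤ n ∧ IsUnit (1 - x ^ n) := by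
  have hc : Tendsto (fun n => c * ‖x ^ n‖) atTop (𝓝 0) := by
    simpa using hx.norm.const_mul c
  obtain ⟨n, hn1, hn⟩ := ((eventually_ge_atTop 1).and (hc.eventually_lt_const one_pos)).exists
  refine ⟨n, hn1, ?_⟩
  by_contra hu
  have hone : ENNReal.ofReal ‖(1 : K)‖ ≤ tauSpec K (x ^ n) :=
    ofReal_norm_le_tauSpec (by rwa [map_one, ← IsUnit.neg_iff, neg_sub])
  rw [norm_one, ENNReal.ofReal_one] at hone
  exact (ENNReal.ofReal_lt_one.mpr hn).not_ge (hone.trans (h5 _))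

namespace IsZariskian

theorem of_exists_isUnit_one_sub_pow {A : Type*} [NormedCommRing A]
    (h6 : ∀ x : A, ‖x‖ < 1 → ∃ n, IsUnit (1 - x ^ n)) : IsZariskian A := by
  intro x hx
  obtain ⟨N, hN⟩ :=
    (hx.norm.eventually_lt_const (by rw [norm_zero]; exact one_pos)).exists_forall_of_atTop
  obtain ⟨k, hk⟩ := h6 _ (hN (2 * N) (by omega))
  rw [← pow_mul] at hk
  exact isUnit_one_add_of_isUnit_one_sub_pow ((even_two_mul N).mul_right k) hk

variable {A : Type*} [NormedCommRing A] (h : IsZariskian A)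
include h

theorem isUnit_one_add_of_norm_lt_one {z : A} (hz : ‖z‖ < 1) : IsUnit (1 + z) :=
  h z (tendsto_pow_atTop_nhds_zero_of_norm_lt_one hz)

theorem isUnit_one_sub_of_norm_lt_one {z : A} (hz : ‖z‖ < 1) : IsUnit (1 - z) := by
  simpa only [sub_eq_add_neg] using h.isUnit_one_add_of_norm_lt_one (by rwa [norm_neg])

theorem isUnit_one_sub_of_norm_pow_lt_one {z : A} {N : ℕ} (hz : ‖z ^ N‖ < 1) :
    IsUnit (1 - z) :=
  isUnit_of_dvd_unit (one_sub_dvd_one_sub_pow z N) (h.isUnit_one_sub_of_norm_lt_one hz)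

theorem tendsto_geom_sum {x : A} (hx : ‖x‖ < 1) :
    Tendsto (fun N => ∑ i ∈ range N, x ^ i) atTop (𝓝 (Ring.inverse (1 - x))) :=
  tendsto_geom_sum_of_isUnit_one_sub (tendsto_pow_atTop_nhds_zero_of_norm_lt_one hx)
    (h.isUnit_one_sub_of_norm_lt_one hx)

theorem isUnit_of_norm_inv_mul_sub_lt_one (u : Aˣ) {v : A} (hv : ‖(↑u⁻¹ : A) * (v - u)‖ < 1) :
    IsUnit v := by
  have hv_eq : v = u * (1 + ↑u⁻¹ * (v - u)) := by
    rw [mul_add, mul_one, Units.mul_inv_cancel_left, add_sub_cancel]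
  rw [hv_eq]
  exact u.isUnit.mul (h.isUnit_one_add_of_norm_lt_one hv)

theorem isOpen_setOf_isUnit : IsOpen {y : A | IsUnit y} := by
  refine isOpen_iff_forall_mem_open.mpr ?_
  rintro _ ⟨u, rfl⟩
  refine ⟨{v | ‖(↑u⁻¹ : A) * (v - u)‖ < 1}, fun v hv => h.isUnit_of_norm_inv_mul_sub_lt_one u hv,
    isOpen_lt (by fun_prop) continuous_const, ?_⟩
  simp

theorem norm_inv_mul_le_of_not_isUnit [NormOneClass A] (hA : IsNonarchimedean (fun a : A => ‖a‖))
    (u : Aˣ) {y : A} (hy : ¬ IsUnit y) : ‖(↑u⁻¹ : A) * y‖ ≤ ‖(↑u⁻¹ : A)‖ * ‖y - u‖ := by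
  have hz : 1 ≤ ‖(↑u⁻¹ : A) * (y - u)‖ :=
    not_lt.mp fun hlt => hy (h.isUnit_of_norm_inv_mul_sub_lt_one u hlt)
  calc ‖(↑u⁻¹ : A) * y‖ = ‖1 + ↑u⁻¹ * (y - u)‖ := by rw [mul_sub, Units.inv_mul, add_sub_cancel]
    _ ≤ max ‖(1 : A)‖ ‖↑u⁻¹ * (y - u)‖ := hA _ _
    _ = ‖↑u⁻¹ * (y - u)‖ := max_eq_right (norm_one.trans_le hz)
    _ ≤ ‖(↑u⁻¹ : A)‖ * ‖y - u‖ := norm_mul_le _ _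

theorem isTopDivZero_of_mem_frontier (K : Type*) [NontriviallyNormedField K] [NormedAlgebra K A]
    [NormOneClass A] (hA : IsNonarchimedean (fun a : A => ‖a‖)) {y : A}
    (hy : y ∈ frontier {y : A | IsUnit y}) : IsTopDivZero y := by
  have : Nontrivial A := NormOneClass.nontrivial
  rw [h.isOpen_setOf_isUnit.frontier_eq] at hy
  obtain ⟨u, hu, hlim⟩ := mem_closure_iff_seq_limit.mp hy.1
  choose v hv using hu
  refine isTopDivZero_of_norm_mul_le K (a := fun n => ↑(v n)⁻¹) (ε := fun n => ‖y - u n‖)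
    (fun n => Units.norm_pos _) ?_ fun n => ?_
  · simpa using ((tendsto_const_nhds (x := y)).sub hlim).norm
  · rw [← hv n]
    exact h.norm_inv_mul_le_of_not_isUnit hA (v n) hy.2

variable {K : Type*} [NontriviallyNormedField K] [NormedAlgebra K A]

theorem isUnit_sub_algebraMap_of_spcSeminorm_lt {x : A} {lam : K}
    (hlt : spcSeminorm x < ‖lam‖) : IsUnit (x - algebraMap K A lam) := by
  have hlam : lam ≠ 0 := norm_pos_iff.mp ((spcSeminorm_nonneg x).trans_lt hlt)
  obtain ⟨N, hN⟩ := exists_norm_pow_lt_pow_of_spcSeminorm_lt hlt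
  have hw : ‖(lam⁻¹ • x) ^ N‖ < 1 := by
    rwa [smul_pow, norm_smul, norm_pow, norm_inv, inv_pow, inv_mul_lt_iff₀ (by positivity),
      mul_one]
  have hx_eq : x - algebraMap K A lam = -(algebraMap K A lam * (1 - lam⁻¹ • x)) := by
    rw [mul_sub, mul_one, ← Algebra.smul_def, smul_inv_smul₀ hlam, neg_sub]
  rw [hx_eq]
  exact (((isUnit_iff_ne_zero.mpr hlam).map _).mul (h.isUnit_one_sub_of_norm_pow_lt_one hw)).neg

theorem tauSpec_le_spcSeminorm (x : A) : tauSpec K x ≤ ENNReal.ofReal (spcSeminorm x) :=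
  tauSpec_le_ofReal fun _ hlam =>
    not_lt.mp fun hlt => hlam (h.isUnit_sub_algebraMap_of_spcSeminorm_lt hlt)

end IsZariskian

theorem zariskian_normed_algebra_tfae {K A : Type*}
    [NontriviallyNormedField K]
    [NormedCommRing A] [NormOneClass A] [NormedAlgebra K A]
    (hA : IsNonarchimedean (fun a : A => ‖a‖)) :
    List.TFAE [
      ∀ x : A, Tendsto (fun n : ℕ => x ^ n) atTop (nhds 0) → IsUnit (1 + x),
      ∀ x ∈ frontier {y : A | IsUnit y}, IsTopDivZero x,
      ∀ x : A, tauSpec K x ≤ ENNReal.ofReal (spcSeminorm x),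
      ∀ x : A, tauSpec K x ≤ ENNReal.ofReal ‖x‖,
      ∃ c : ℝ, 0 < c ∧ ∀ x : A, tauSpec K x ≤ ENNReal.ofReal (c * ‖x‖),
      ∀ x : A, ‖x‖ < 1 → ∃ n : ℕ, 1 ≤ n ∧ IsUnit (1 - x ^ n),
      ∀ x : A, (∃ L : ℝ, Tendsto (fun N : ℕ => ∑ n ∈ Finset.range N, ‖x‖ ^ n) atTop (nhds L)) →
        ∃ y : A, Tendsto (fun N : ℕ => ∑ n ∈ Finset.range N, x ^ n) atTop (nhds y)
    ] := by
  tfae_have 1 → 2 := fun h _ hy => IsZariskian.isTopDivZero_of_mem_frontier h K hA hy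
  tfae_have 2 → 6 := fun h x hx =>
    exists_isUnit_one_sub_pow_of_isTopDivZero h (tendsto_pow_atTop_nhds_zero_of_norm_lt_one hx)
  tfae_have 1 → 3 := fun h => IsZariskian.tauSpec_le_spcSeminorm h
  tfae_have 3 → 4 := fun h x => (h x).trans (ENNReal.ofReal_le_ofReal (spcSeminorm_le_norm x))
  tfae_have 4 → 5 := fun h => ⟨1, one_pos, by simpa only [one_mul] using h⟩
  tfae_have 5 → 6 := fun ⟨_, _, h⟩ x hx =>
    exists_isUnit_one_sub_pow_of_tauSpec_le h (tendsto_pow_atTop_nhds_zero_of_norm_lt_one hx)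
  tfae_have 6 → 1 := fun h =>
    IsZariskian.of_exists_isUnit_one_sub_pow fun x hx => (h x hx).imp fun _ => And.right
  tfae_have 1 → 7 := fun h x ⟨_, hL⟩ =>
    ⟨_, IsZariskian.tendsto_geom_sum h (lt_one_of_tendsto_geom_sum (norm_nonneg x) hL)⟩
  tfae_have 7 → 6 := fun h x hx => by
    obtain ⟨y, hy⟩ := h x ⟨_, (hasSum_geometric_of_lt_one (norm_nonneg x) hx).tendsto_sum_nat⟩
    refine ⟨1, le_rfl, ?_⟩
    rw [pow_one]
    exact isUnit_one_sub_of_tendsto_geom_sum (tendsto_pow_atTop_nhds_zero_of_norm_lt_one hx) hy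
  tfae_finish
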